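/- Let R = (0, l) x (-h, h) with l, h > 0, and let v = (u1, u2) : R -> R^2 be a harmonic vector field (each component harmonic, sufficiently smooth up to the flat parts of the boundary) satisfying div v = 0 in R and v = 0 on the horizontal segments (0, l) x {h} and (0, l) x {-h}. Then v is identically zero in R. -/

import Mathlib

/-!
On the top side `y = h` the field vanishes, hence so do the tangential derivatives `∂ₓu₁, ∂ₓu₂`,
and `div v = 0` (extended to the boundary by continuity) gives `∂ᵧu₂ = 0` there as well.
As `u₂` is harmonic, `g = ∂ₓu₂ - i ∂ᵧu₂` is holomorphic, and it vanishes on a side of a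
rectangle. Such a function is zero: its Cauchy integral `K(w)` over the boundary of the rectangle
only sees the other three sides, so `K` is holomorphic on a connected region crossing the top
side; `K` vanishes above the rectangle by Cauchy–Goursat and equals `2πi g(w)` inside it by the
Cauchy formula. So `u₂` is constant, hence zero. Then `∂ₓu₁ = -∂ᵧu₂ = 0`, and harmonicity forces
`u₁ = A + C y`, which vanishes at `y = ±h` only if `A = C = 0`.
-/

open Set

/-- Second directional derivative of `f` in direction `v` (applied twice). -/
noncomputable def d2 (f : ℝ × ℝ → ℝ) (v : ℝ × ℝ) (p : ℝ × ℝ) : ℝ :=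
  fderiv ℝ (fun q => fderiv ℝ f q v) p v

open Complex Filter MeasureTheory intervalIntegral InnerProductSpace
open scoped Real Topology

/-- `∮ f dz` counterclockwise over the boundary of `[a, b] × [c, d]`, in the form of
`Complex.integral_boundary_rect_eq_zero_of_continuousOn_of_differentiableOn`. -/
noncomputable def rectBoundaryIntegral (f : ℂ → ℂ) (a b c d : ℝ) : ℂ :=
  (∫ x in a..b, f (x + c * I)) - (∫ x in a..b, f (x + d * I))
    + I * (∫ y in c..d, f (b + y * I)) - I * ∫ y in c..d, f (a + y * I)

theorem rectBoundaryIntegral_eq_zero {f : ℂ → ℂ} {a b c d : ℝ} (hab : a ≤ b) (hcd : c ≤ d)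
    (hc : ContinuousOn f (Icc a b ×ℂ Icc c d)) (hd : DifferentiableOn ℂ f (Ioo a b ×ℂ Ioo c d)) :
    rectBoundaryIntegral f a b c d = 0 := by
  have := integral_boundary_rect_eq_zero_of_continuousOn_of_differentiableOn f
    (a + c * I) (b + d * I) (by simpa [uIcc_of_le hab, uIcc_of_le hcd] using hc)
    (by simpa [hab, hcd] using hd)
  simpa [rectBoundaryIntegral] using this

theorem ContinuousOn.comp_horizontal_line {f : ℂ → ℂ} {s t : Set ℝ} (hf : ContinuousOn f (s ×ℂ t))
    {y : ℝ} (hy : y ∈ t) : ContinuousOn (fun x : ℝ => f (x + y * I)) s :=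
  hf.comp (by fun_prop) fun x hx => by simpa [mem_reProdIm] using ⟨hx, hy⟩

theorem ContinuousOn.comp_vertical_line {f : ℂ → ℂ} {s t : Set ℝ} (hf : ContinuousOn f (s ×ℂ t))
    {x : ℝ} (hx : x ∈ s) : ContinuousOn (fun y : ℝ => f (x + y * I)) t :=
  hf.comp (by fun_prop) fun y hy => by simpa [mem_reProdIm] using ⟨hx, hy⟩

theorem integral_inv_affine {σ k : ℂ} (hσ : σ ≠ 0) {α β : ℝ}
    (hmem : ∀ t ∈ uIcc α β, σ * t + k ∈ slitPlane) :
    ∫ t : ℝ in α..β, (σ * t + k)⁻¹ = σ⁻¹ * (log (σ * β + k) - log (σ * α + k)) := by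
  have hderiv : ∀ t ∈ uIcc α β,
      HasDerivAt (fun s : ℝ => σ⁻¹ * log (σ * s + k)) ((σ * t + k)⁻¹) t := by
    intro t ht
    have hlin : HasDerivAt (fun z : ℂ => σ * z + k) σ t := by
      simpa using ((hasDerivAt_id (t : ℂ)).const_mul σ).add_const k
    have := (((hasDerivAt_log (hmem t ht)).comp (t : ℂ) hlin).const_mul σ⁻¹).comp_ofReal
    rwa [show σ⁻¹ * ((σ * t + k)⁻¹ * σ) = (σ * t + k)⁻¹ by field_simp] at this
  rw [integral_eq_sub_of_hasDerivAt hderiv]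
  · ring
  · refine ContinuousOn.intervalIntegrable (ContinuousOn.inv₀ (by fun_prop) ?_)
    exact fun t ht => slitPlane_ne_zero (hmem t ht)

theorem log_neg_of_im_neg {z : ℂ} (hz : z.im < 0) : log (-z) = log z + π * I := by
  apply Complex.ext <;> simp [log_re, log_im, arg_neg_eq_arg_add_pi_of_im_neg hz]

theorem log_neg_of_im_pos {z : ℂ} (hz : 0 < z.im) : log (-z) = log z - π * I := by
  apply Complex.ext <;> simp [log_re, log_im, arg_neg_eq_arg_sub_pi_of_im_pos hz]

theorem rectBoundaryIntegral_inv_sub {a b c d : ℝ} {w : ℂ} (hw : w ∈ Ioo a b ×ℂ Ioo c d) :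
    rectBoundaryIntegral (fun z => (z - w)⁻¹) a b c d = 2 * π * I := by
  obtain ⟨⟨ha, hb⟩, hc, hd⟩ := hw
  have horiz : ∀ y ≠ w.im, ∫ x : ℝ in a..b, ((x : ℂ) + y * I - w)⁻¹
      = log (b + y * I - w) - log (a + y * I - w) := fun y hy => by
    have := integral_inv_affine (σ := 1) (k := y * I - w) one_ne_zero (α := a) (β := b)
      fun t _ => Or.inr (by simpa [sub_eq_zero] using hy)
    simpa [add_sub_assoc] using this
  have right_side : I * ∫ y : ℝ in c..d, ((b : ℂ) + y * I - w)⁻¹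
      = log (b + d * I - w) - log (b + c * I - w) := by
    have := integral_inv_affine (σ := I) (k := b - w) I_ne_zero (α := c) (β := d)
      fun t _ => Or.inl (by simpa using hb)
    have hint : ∫ y : ℝ in c..d, ((b : ℂ) + y * I - w)⁻¹
        = ∫ y : ℝ in c..d, (I * y + (b - w))⁻¹ := by
      congr! 2 with y; ring
    rw [hint, this, ← mul_assoc, mul_inv_cancel₀ I_ne_zero, one_mul]
    ring_nf
  have left_side : I * ∫ y : ℝ in c..d, ((a : ℂ) + y * I - w)⁻¹
      = log (-(a + d * I - w)) - log (-(a + c * I - w)) := by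
    have := integral_inv_affine (σ := -I) (k := w - a) (neg_ne_zero.2 I_ne_zero)
      (α := c) (β := d) fun t _ => Or.inl (by simpa using ha)
    have hint : ∫ y : ℝ in c..d, ((a : ℂ) + y * I - w)⁻¹
        = -∫ y : ℝ in c..d, (-I * y + (w - a))⁻¹ := by
      rw [← intervalIntegral.integral_neg]
      congr! 2 with y
      rw [← inv_neg]; ring_nf
    rw [hint, this, inv_neg, inv_I, neg_neg, mul_neg, ← mul_assoc, I_mul_I, neg_one_mul, neg_neg]
    ring_nf
  rw [rectBoundaryIntegral, horiz c hc.ne, horiz d hd.ne', right_side, left_side,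
    log_neg_of_im_neg (z := a + c * I - w) (by simpa using hc),
    log_neg_of_im_pos (z := a + d * I - w) (by simpa using hd)]
  ring

theorem integral_div_sub_eq_integral_dslope_add {g : ℂ → ℂ} {γ : ℝ → ℂ} {w : ℂ} {α β : ℝ}
    (hγ : ContinuousOn γ (uIcc α β)) (hg : ContinuousOn (fun t => g (γ t)) (uIcc α β))
    (hne : ∀ t ∈ uIcc α β, γ t ≠ w) :
    ∫ t in α..β, g (γ t) / (γ t - w)
      = (∫ t in α..β, dslope g w (γ t)) + g w * ∫ t in α..β, (γ t - w)⁻¹ := by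
  have hsub : ∀ t ∈ uIcc α β, γ t - w ≠ 0 := fun t ht => sub_ne_zero.2 (hne t ht)
  have hinv : IntervalIntegrable (fun t => g w * (γ t - w)⁻¹) volume α β :=
    (continuousOn_const.mul ((hγ.sub continuousOn_const).inv₀ hsub)).intervalIntegrable
  have hdiv : IntervalIntegrable (fun t => g (γ t) / (γ t - w)) volume α β :=
    (hg.div (hγ.sub continuousOn_const) hsub).intervalIntegrable
  have hdslope : EqOn (fun t => dslope g w (γ t))
      (fun t => g (γ t) / (γ t - w) - g w * (γ t - w)⁻¹) (uIcc α β) := fun t ht => by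
    simp only [dslope_of_ne g (hne t ht), slope_def_field]
    ring
  rw [integral_congr hdslope, integral_sub hdiv hinv, intervalIntegral.integral_const_mul]
  ring

theorem rectBoundaryIntegral_div_sub {g : ℂ → ℂ} {a b c d : ℝ} {w : ℂ}
    (hgc : ContinuousOn g (Icc a b ×ℂ Icc c d)) (hgd : DifferentiableOn ℂ g (Ioo a b ×ℂ Ioo c d))
    (hw : w ∈ Ioo a b ×ℂ Ioo c d) :
    rectBoundaryIntegral (fun z => g z / (z - w)) a b c d = 2 * π * I * g w := by
  obtain ⟨⟨ha, hb⟩, hc, hd⟩ := id hw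
  have hab : a ≤ b := (ha.trans hb).le
  have hcd : c ≤ d := (hc.trans hd).le
  have hnhds : Ioo a b ×ℂ Ioo c d ∈ 𝓝 w := (isOpen_Ioo.reProdIm isOpen_Ioo).mem_nhds hw
  have hdslope : rectBoundaryIntegral (dslope g w) a b c d = 0 :=
    rectBoundaryIntegral_eq_zero hab hcd
      ((continuousOn_dslope (mem_of_superset hnhds (reProdIm_subset_iff'.2
        (.inl ⟨Ioo_subset_Icc_self, Ioo_subset_Icc_self⟩)))).2 ⟨hgc, hgd.differentiableAt hnhds⟩)
      ((differentiableOn_dslope hnhds).2 hgd)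
  have horiz : ∀ y ∈ Icc c d, y ≠ w.im → ∫ x : ℝ in a..b, g (x + y * I) / (x + y * I - w)
      = (∫ x : ℝ in a..b, dslope g w (x + y * I)) + g w * ∫ x : ℝ in a..b, (x + y * I - w)⁻¹ :=
    fun y hy hyw => integral_div_sub_eq_integral_dslope_add (by fun_prop)
      (uIcc_of_le hab ▸ hgc.comp_horizontal_line hy) fun x _ h => hyw (by simpa using congrArg im h)
  have vert : ∀ x ∈ Icc a b, x ≠ w.re → ∫ y : ℝ in c..d, g (x + y * I) / (x + y * I - w)
      = (∫ y : ℝ in c..d, dslope g w (x + y * I)) + g w * ∫ y : ℝ in c..d, (x + y * I - w)⁻¹ :=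
    fun x hx hxw => integral_div_sub_eq_integral_dslope_add (by fun_prop)
      (uIcc_of_le hcd ▸ hgc.comp_vertical_line hx) fun y _ h => hxw (by simpa using congrArg re h)
  have hwind := rectBoundaryIntegral_inv_sub hw
  simp only [rectBoundaryIntegral] at hdslope hwind ⊢
  rw [horiz c (left_mem_Icc.2 hcd) hc.ne, horiz d (right_mem_Icc.2 hcd) hd.ne',
    vert b (right_mem_Icc.2 hab) hb.ne', vert a (left_mem_Icc.2 hab) ha.ne]
  linear_combination hdslope + g w * hwind

theorem differentiableAt_integral_div_sub {ψ γ : ℝ → ℂ} {α β : ℝ} (hψ : ContinuousOn ψ (uIcc α β))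
    (hγ : ContinuousOn γ (uIcc α β)) {w : ℂ} (hw : ∀ t ∈ uIcc α β, γ t ≠ w) :
    DifferentiableAt ℂ (fun z => ∫ t in α..β, ψ t / (γ t - z)) w := by
  obtain ⟨δ, hδ, hdist⟩ : ∃ δ > 0, ∀ t ∈ uIcc α β, ∀ z ∈ Metric.ball w δ, δ ≤ ‖γ t - z‖ := by
    obtain ⟨t₀, ht₀, hmin⟩ :=
      isCompact_uIcc.exists_isMinOn nonempty_uIcc (hγ.sub continuousOn_const).norm
    refine ⟨‖γ t₀ - w‖ / 2, by simpa [sub_eq_zero] using hw t₀ ht₀, fun t ht z hz => ?_⟩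
    have hz' : ‖z - w‖ < ‖γ t₀ - w‖ / 2 := by simpa [dist_eq_norm] using hz
    have := norm_sub_norm_le (γ t - w) (z - w)
    rw [sub_sub_sub_cancel_right] at this
    linarith [show ‖γ t₀ - w‖ ≤ ‖γ t - w‖ from hmin ht]
  have hne : ∀ t ∈ uIcc α β, ∀ z ∈ Metric.ball w δ, γ t - z ≠ 0 := fun t ht z hz =>
    norm_pos_iff.1 (hδ.trans_le (hdist t ht z hz))
  obtain ⟨C, hC⟩ := isCompact_uIcc.exists_bound_of_continuousOn hψ
  have hC0 : 0 ≤ C := (norm_nonneg _).trans (hC α left_mem_uIcc)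
  have hint : ∀ z ∈ Metric.ball w δ, ∀ n : ℕ,
      IntervalIntegrable (fun t => ψ t / (γ t - z) ^ n) volume α β := fun z hz n =>
    (hψ.div ((hγ.sub continuousOn_const).pow n)
      fun t ht => pow_ne_zero n (hne t ht z hz)).intervalIntegrable
  refine (intervalIntegral.hasDerivAt_integral_of_dominated_loc_of_deriv_le
    (F' := fun z t => ψ t / (γ t - z) ^ 2) (bound := fun _ => C / δ ^ 2)
    (Metric.ball_mem_nhds w hδ) ?_ ?_ (hint w (Metric.mem_ball_self hδ) 2).def'.1
    (ae_of_all _ fun t ht z hz => ?_) intervalIntegrable_const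
    (ae_of_all _ fun t ht z hz => ?_)).2.differentiableAt
  · filter_upwards [Metric.ball_mem_nhds w hδ] with z hz
    simpa using (hint z hz 1).def'.1
  · simpa using hint w (Metric.mem_ball_self hδ) 1
  · have ht' := uIoc_subset_uIcc ht
    rw [norm_div, norm_pow]
    exact div_le_div₀ hC0 (hC t ht') (by positivity) (pow_le_pow_left₀ hδ.le (hdist t ht' z hz) 2)
  · simpa using (hasDerivAt_const z (ψ t)).fun_div ((hasDerivAt_id z).const_sub (γ t))
      (hne t (uIoc_subset_uIcc ht) z hz)

theorem Convex.reProdIm {s t : Set ℝ} (hs : Convex ℝ s) (ht : Convex ℝ t) :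
    Convex ℝ (s ×ℂ t) := fun _ hz _ hw _ _ ha hb hab =>
  ⟨by simpa using hs hz.1 hw.1 ha hb hab, by simpa using ht hz.2 hw.2 ha hb hab⟩

theorem eq_zero_of_eq_zero_on_top_side {g : ℂ → ℂ} {a b c d : ℝ}
    (hgc : ContinuousOn g (Icc a b ×ℂ Icc c d)) (hgd : DifferentiableOn ℂ g (Ioo a b ×ℂ Ioo c d))
    (htop : ∀ x ∈ Ioo a b, g (x + d * I) = 0) {w : ℂ} (hw : w ∈ Ioo a b ×ℂ Ioo c d) :
    g w = 0 := by
  obtain ⟨⟨ha, hb⟩, hc, hd⟩ := id hw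
  have hab : a < b := ha.trans hb
  have hcd : c < d := hc.trans hd
  have htop' : ∀ x ∈ Icc a b, g (x + d * I) = 0 := by
    refine EqOn.of_subset_closure (f := fun x : ℝ => g (x + d * I)) (g := 0) htop
      (hgc.comp_horizontal_line (right_mem_Icc.2 hcd.le)) continuousOn_const Ioo_subset_Icc_self ?_
    rw [closure_Ioo hab.ne]
  set K : ℂ → ℂ := fun z => rectBoundaryIntegral (fun ζ => g ζ / (ζ - z)) a b c d with hK
  -- The top side contributes nothing, so `K` is holomorphic off the other three sides.
  have hK_three_sides : K = fun z => (∫ x : ℝ in a..b, g (x + c * I) / (x + c * I - z))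
      + I * (∫ y : ℝ in c..d, g (b + y * I) / (b + y * I - z))
      - I * ∫ y : ℝ in c..d, g (a + y * I) / (a + y * I - z) := by
    funext z
    have : ∫ x : ℝ in a..b, g (x + d * I) / (x + d * I - z) = 0 := by
      rw [integral_congr (g := 0) fun x hx => by simp [htop' x (uIcc_of_le hab.le ▸ hx)]]
      simp
    simp only [hK, rectBoundaryIntegral, this, sub_zero]
  have hKd : DifferentiableOn ℂ K (Ioo a b ×ℂ Ioi c) := by
    intro z ⟨⟨hza, hzb⟩, (hzc : c < z.im)⟩
    rw [hK_three_sides]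
    have hx : ∀ y ∈ Icc c d, ContinuousOn (fun x : ℝ => g (x + y * I)) (uIcc a b) := fun y hy =>
      uIcc_of_le hab.le ▸ hgc.comp_horizontal_line hy
    have hy : ∀ x ∈ Icc a b, ContinuousOn (fun y : ℝ => g (x + y * I)) (uIcc c d) := fun x hx =>
      uIcc_of_le hcd.le ▸ hgc.comp_vertical_line hx
    refine (((differentiableAt_integral_div_sub (hx c (left_mem_Icc.2 hcd.le)) (by fun_prop)
      fun x _ h => ?_).add ((differentiableAt_integral_div_sub (hy b (right_mem_Icc.2 hab.le))
        (by fun_prop) fun y _ h => ?_).const_mul I)).sub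
      ((differentiableAt_integral_div_sub (hy a (left_mem_Icc.2 hab.le))
        (by fun_prop) fun y _ h => ?_).const_mul I)).differentiableWithinAt
    · exact hzc.ne (by simpa using congrArg im h)
    · linarith [show b = z.re by simpa using congrArg re h]
    · linarith [show a = z.re by simpa using congrArg re h]
  have hK_above : ∀ z ∈ Ioo a b ×ℂ Ioi d, K z = 0 := by
    intro z hz
    have hne : ∀ ζ ∈ Icc a b ×ℂ Icc c d, ζ - z ≠ 0 := fun ζ hζ h => by
      have := congrArg im (sub_eq_zero.1 h)
      exact absurd hζ.2.2 (not_le.2 (this ▸ hz.2))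
    exact rectBoundaryIntegral_eq_zero hab.le hcd.le (hgc.div (by fun_prop) hne)
      (hgd.div (by fun_prop) fun ζ hζ => hne ζ ⟨Ioo_subset_Icc_self hζ.1, Ioo_subset_Icc_self hζ.2⟩)
  have hK_zero : EqOn K 0 (Ioo a b ×ℂ Ioi c) := by
    have hz₀ : (⟨(a + b) / 2, d + 1⟩ : ℂ) ∈ Ioo a b ×ℂ Ioi d :=
      ⟨⟨by linarith, by linarith⟩, show d < d + 1 by linarith⟩
    exact (hKd.analyticOnNhd (isOpen_Ioo.reProdIm isOpen_Ioi)
      ).eqOn_zero_of_preconnected_of_eventuallyEq_zero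
      ((convex_Ioo a b).reProdIm (convex_Ioi c)).isPreconnected ⟨hz₀.1, hcd.trans hz₀.2⟩
      (mem_of_superset ((isOpen_Ioo.reProdIm isOpen_Ioi).mem_nhds hz₀) hK_above)
  have hKw : K w = 2 * π * I * g w := rectBoundaryIntegral_div_sub hgc hgd hw
  rw [hK_zero ⟨hw.1, hc⟩] at hKw
  simpa [Real.pi_ne_zero, I_ne_zero] using hKw.symm

theorem ContinuousLinearMap.ext_prod_one {F : Type*} [NormedAddCommGroup F] [NormedSpace ℝ F]
    {L M : ℝ × ℝ →L[ℝ] F} (h₁ : L (1, 0) = M (1, 0)) (h₂ : L (0, 1) = M (0, 1)) : L = M :=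
  prod_ext (ext_ring h₁) (ext_ring h₂)

theorem d2_eq_fderiv_fderiv {f : ℝ × ℝ → ℝ} {p : ℝ × ℝ} (hf : DifferentiableAt ℝ (fderiv ℝ f) p)
    (v : ℝ × ℝ) : d2 f v p = fderiv ℝ (fderiv ℝ f) p v v := by
  rw [d2, fderiv_clm_apply hf (differentiableAt_const v)]
  simp

theorem harmonicAt_comp_equivRealProd {u : ℝ × ℝ → ℝ} {U : Set (ℝ × ℝ)} (hU : IsOpen U)
    (hu : ContDiffOn ℝ 2 u U) (hΔ : ∀ p ∈ U, d2 u (1, 0) p + d2 u (0, 1) p = 0) {z : ℂ}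
    (hz : equivRealProdCLM z ∈ U) : HarmonicAt (u ∘ equivRealProdCLM) z := by
  refine ⟨(hu.contDiffAt (hU.mem_nhds hz)).comp z equivRealProdCLM.contDiff.contDiffAt, ?_⟩
  filter_upwards [equivRealProdCLM.continuous.continuousAt.preimage_mem_nhds (hU.mem_nhds hz)]
    with w hw
  have hdiff : DifferentiableAt ℝ (fderiv ℝ u) (equivRealProdCLM w) :=
    ((hu.fderiv_of_isOpen hU le_rfl).differentiableOn one_ne_zero).differentiableAt (hU.mem_nhds hw)
  have := hΔ _ hw
  rw [d2_eq_fderiv_fderiv hdiff, d2_eq_fderiv_fderiv hdiff] at this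
  have hcomp : iteratedFDeriv ℝ 2 (u ∘ equivRealProdCLM) w
      = (iteratedFDeriv ℝ 2 u (equivRealProdCLM w)).compContinuousLinearMap
          fun _ => (equivRealProdCLM : ℂ →L[ℝ] ℝ × ℝ) := by
    simpa [iteratedFDerivWithin_univ] using
      equivRealProdCLM.iteratedFDerivWithin_comp_right u uniqueDiffOn_univ (mem_univ _) 2
  simpa [laplacian_eq_iteratedFDeriv_complexPlane, hcomp, iteratedFDeriv_two_apply] using this

theorem fderiv_eq_zero_of_fderiv_eq_zero_on_top_side {u : ℝ × ℝ → ℝ} {U : Set (ℝ × ℝ)}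
    (hU : IsOpen U) (hu : ContDiffOn ℝ 2 u U) {a b c d : ℝ} (hsub : Icc a b ×ˢ Icc c d ⊆ U)
    (hΔ : ∀ p ∈ Ioo a b ×ˢ Ioo c d, d2 u (1, 0) p + d2 u (0, 1) p = 0)
    (htop : ∀ x ∈ Ioo a b, fderiv ℝ u (x, d) = 0) {p : ℝ × ℝ} (hp : p ∈ Ioo a b ×ˢ Ioo c d) :
    fderiv ℝ u p = 0 := by
  set e := equivRealProdCLM
  set g : ℂ → ℂ := fun z => fderiv ℝ (u ∘ e) z 1 - I * fderiv ℝ (u ∘ e) z I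
  have hg_eq : g = fun z => fderiv ℝ u (e z) (1, 0) - I * fderiv ℝ u (e z) (0, 1) := by
    funext z; simp [g, e, e.comp_right_fderiv]
  have hR : IsOpen (Ioo a b ×ˢ Ioo c d) := isOpen_Ioo.prod isOpen_Ioo
  have hRU : Ioo a b ×ˢ Ioo c d ⊆ U :=
    (Set.prod_mono Ioo_subset_Icc_self Ioo_subset_Icc_self).trans hsub
  have hgp : g (e.symm p) = 0 := by
    refine eq_zero_of_eq_zero_on_top_side ?_ (fun z hz => ?_) (fun x hx => ?_)
      (by simpa [e, mem_reProdIm] using hp)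
    · rw [hg_eq]
      have := (hu.continuousOn_fderiv_of_isOpen hU one_le_two).comp e.continuous.continuousOn
        (fun z hz => hsub hz)
      fun_prop
    · exact (HarmonicAt.differentiableAt_complex_partial
        (harmonicAt_comp_equivRealProd hR (hu.mono hRU) hΔ hz)).differentiableWithinAt
    · simp [hg_eq, e, htop x hx]
  simp only [hg_eq, e, equivRealProdCLM_apply, equivRealProdCLM_symm_apply_re,
    equivRealProdCLM_symm_apply_im] at hgp
  refine ContinuousLinearMap.ext_prod_one ?_ ?_
  · simpa using congrArg re hgp
  · simpa using congrArg im hgp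

theorem fderiv_apply_one_zero_eq_zero {u : ℝ × ℝ → ℝ} {x y : ℝ}
    (hu : DifferentiableAt ℝ u (x, y)) (h0 : ∀ᶠ t in 𝓝 x, u (t, y) = 0) :
    fderiv ℝ u (x, y) (1, 0) = 0 := by
  have hline : HasDerivAt (fun t => u (t, y)) (fderiv ℝ u (x, y) (1, 0)) x :=
    hu.hasFDerivAt.comp_hasDerivAt x ((hasDerivAt_id x).prodMk (hasDerivAt_const x y))
  exact hline.unique ((hasDerivAt_const x 0).congr_of_eventuallyEq h0)

theorem fderiv_eq_zero_of_div_eq_zero_of_eventually_eq_zero {u v : ℝ × ℝ → ℝ}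
    {U R : Set (ℝ × ℝ)} (hU : IsOpen U) (hu : ContDiffOn ℝ 1 u U) (hv : ContDiffOn ℝ 1 v U)
    (hRU : closure R ⊆ U) (hdiv : ∀ p ∈ R, fderiv ℝ u p (1, 0) + fderiv ℝ v p (0, 1) = 0)
    {x y : ℝ} (hxy : (x, y) ∈ closure R) (hu0 : ∀ᶠ t in 𝓝 x, u (t, y) = 0)
    (hv0 : ∀ᶠ t in 𝓝 x, v (t, y) = 0) : fderiv ℝ v (x, y) = 0 := by
  have hdiv' : fderiv ℝ u (x, y) (1, 0) + fderiv ℝ v (x, y) (0, 1) = 0 := by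
    refine EqOn.of_subset_closure (f := fun p => fderiv ℝ u p (1, 0) + fderiv ℝ v p (0, 1))
      hdiv (ContinuousOn.mono ?_ hRU) continuousOn_const subset_closure subset_rfl hxy
    exact ((hu.continuousOn_fderiv_of_isOpen hU le_rfl).clm_apply continuousOn_const).add
      ((hv.continuousOn_fderiv_of_isOpen hU le_rfl).clm_apply continuousOn_const)
  have hux := fderiv_apply_one_zero_eq_zero
    ((hu.differentiableOn one_ne_zero).differentiableAt (hU.mem_nhds (hRU hxy))) hu0
  have hvx := fderiv_apply_one_zero_eq_zero
    ((hv.differentiableOn one_ne_zero).differentiableAt (hU.mem_nhds (hRU hxy))) hv0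
  exact ContinuousLinearMap.ext_prod_one (by simpa using hvx)
    (by rw [zero_apply]; linarith)

theorem exists_eq_add_mul_snd {u : ℝ × ℝ → ℝ} {S : Set (ℝ × ℝ)} (hS : IsOpen S)
    (hS' : IsPreconnected S) (hu : ContDiffOn ℝ 2 u S) (hx : ∀ p ∈ S, fderiv ℝ u p (1, 0) = 0)
    (hΔ : ∀ p ∈ S, d2 u (1, 0) p + d2 u (0, 1) p = 0) :
    ∃ A C : ℝ, ∀ p ∈ S, u p = A + C * p.2 := by
  have hdiff : ∀ p ∈ S, DifferentiableAt ℝ (fderiv ℝ u) p := fun p hp =>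
    ((hu.fderiv_of_isOpen hS le_rfl).differentiableOn one_ne_zero).differentiableAt (hS.mem_nhds hp)
  have hdd : ∀ p ∈ S, ∀ v,
      fderiv ℝ (fun q => fderiv ℝ u q v) p = (fderiv ℝ (fderiv ℝ u) p).flip v :=
    fun p hp v => by simp [fderiv_clm_apply (hdiff p hp) (differentiableAt_const v)]
  have hxx : ∀ p ∈ S, ∀ v, fderiv ℝ (fderiv ℝ u) p v (1, 0) = 0 := fun p hp v => by
    have hev : (fun q => fderiv ℝ u q (1, 0)) =ᶠ[𝓝 p] fun _ => 0 :=
      eventually_of_mem (hS.mem_nhds hp) hx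
    have : fderiv ℝ (fun q => fderiv ℝ u q (1, 0)) p = 0 := by simp [hev.fderiv_eq]
    simpa [hdd p hp] using congrArg (· v) this
  obtain ⟨C, hC⟩ : ∃ C, ∀ p ∈ S, fderiv ℝ u p (0, 1) = C := by
    refine hS.exists_is_const_of_fderiv_eq_zero (𝕜 := ℝ) (f := fun q => fderiv ℝ u q (0, 1)) hS'
      (fun p hp => ?_) fun p hp => ?_
    · exact ((hdiff p hp).clm_apply (differentiableAt_const _)).differentiableWithinAt
    have hsymm := (hu.contDiffAt (hS.mem_nhds hp)).isSymmSndFDerivAt (by simp)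
    have hyy := hΔ p hp
    rw [d2_eq_fderiv_fderiv (hdiff p hp), d2_eq_fderiv_fderiv (hdiff p hp), hxx p hp] at hyy
    refine ContinuousLinearMap.ext_prod_one ?_ ?_
    · simp [hdd p hp, hsymm (1, 0) (0, 1), hxx p hp]
    · simpa [hdd p hp] using hyy
  have hlin : ∀ p : ℝ × ℝ, fderiv ℝ (fun q : ℝ × ℝ => C * q.2) p = C • .snd ℝ ℝ ℝ :=
    fun p => (hasFDerivAt_snd.const_mul C).fderiv
  obtain ⟨A, hA⟩ := hS.exists_eq_add_of_fderiv_eq hS' (hu.differentiableOn two_ne_zero)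
    (g := fun p => C * p.2) (by fun_prop) fun p hp => ContinuousLinearMap.ext_prod_one
      (by simp [hx p hp, hlin]) (by simp [hC p hp, hlin])
  exact ⟨A, C, fun p hp => by rw [hA hp]; ring⟩

/-- A harmonic, divergence-free vector field `v = (u1, u2)` on the rectangle
`(0,l) × (-h,h)`, smooth up to the boundary, which vanishes on the two horizontal
boundary segments, is identically zero in the rectangle. -/
theorem stmt_4 (l h : ℝ) (hl : 0 < l) (hh : 0 < h)
    (u1 u2 : ℝ × ℝ → ℝ) (U : Set (ℝ × ℝ)) (hU : IsOpen U)
    (hcl : closure (Ioo 0 l ×ˢ Ioo (-h) h) ⊆ U)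
    (hsm1 : ContDiffOn ℝ 2 u1 U) (hsm2 : ContDiffOn ℝ 2 u2 U)
    (hharm1 : ∀ p ∈ Ioo 0 l ×ˢ Ioo (-h) h, d2 u1 (1, 0) p + d2 u1 (0, 1) p = 0)
    (hharm2 : ∀ p ∈ Ioo 0 l ×ˢ Ioo (-h) h, d2 u2 (1, 0) p + d2 u2 (0, 1) p = 0)
    (hdiv : ∀ p ∈ Ioo 0 l ×ˢ Ioo (-h) h,
      fderiv ℝ u1 p (1, 0) + fderiv ℝ u2 p (0, 1) = 0)
    (hb : ∀ x ∈ Ioo 0 l,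
      u1 (x, h) = 0 ∧ u1 (x, -h) = 0 ∧ u2 (x, h) = 0 ∧ u2 (x, -h) = 0) :
    ∀ p ∈ Ioo 0 l ×ˢ Ioo (-h) h, u1 p = 0 ∧ u2 p = 0 := by
  set R := Ioo 0 l ×ˢ Ioo (-h) h
  have hR : IsOpen R := isOpen_Ioo.prod isOpen_Ioo
  have hR' : IsPreconnected R := ((convex_Ioo 0 l).prod (convex_Ioo (-h) h)).isPreconnected
  have hclR : closure R = Icc 0 l ×ˢ Icc (-h) h := by
    rw [closure_prod_eq, closure_Ioo hl.ne, closure_Ioo (by linarith)]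
  have hsides : ∀ x ∈ Ioo 0 l, (x, h) ∈ closure R ∧ (x, -h) ∈ closure R := fun x hx =>
    hclR ▸ ⟨⟨Ioo_subset_Icc_self hx, by linarith, le_rfl⟩,
      ⟨Ioo_subset_Icc_self hx, le_rfl, by linarith⟩⟩
  have hextend : ∀ {f φ : ℝ × ℝ → ℝ}, ContinuousOn f U → Continuous φ → EqOn f φ R →
      EqOn f φ (closure R) := fun hf hφ hfφ =>
    hfφ.of_subset_closure (hf.mono hcl) hφ.continuousOn subset_closure subset_rfl
  have htop : ∀ x ∈ Ioo 0 l, fderiv ℝ u2 (x, h) = 0 := fun x hx =>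
    fderiv_eq_zero_of_div_eq_zero_of_eventually_eq_zero hU (hsm1.of_le one_le_two)
      (hsm2.of_le one_le_two) hcl hdiv (hsides x hx).1
      (eventually_of_mem (isOpen_Ioo.mem_nhds hx) fun t ht => (hb t ht).1)
      (eventually_of_mem (isOpen_Ioo.mem_nhds hx) fun t ht => (hb t ht).2.2.1)
  have hgrad2 : ∀ q ∈ R, fderiv ℝ u2 q = 0 := fun q hq =>
    fderiv_eq_zero_of_fderiv_eq_zero_on_top_side hU hsm2 (hclR ▸ hcl) hharm2 htop hq
  obtain ⟨A, hA⟩ := hR.exists_is_const_of_fderiv_eq_zero hR'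
    ((hsm2.differentiableOn two_ne_zero).mono (subset_closure.trans hcl)) hgrad2
  obtain ⟨B, C, hBC⟩ := exists_eq_add_mul_snd hR hR' (hsm1.mono (subset_closure.trans hcl))
    (fun q hq => by simpa [hgrad2 q hq] using hdiv q hq) hharm1
  intro p hp
  have hA0 := hextend hsm2.continuousOn continuous_const hA (hsides p.1 hp.1).1
  have htop1 := hextend hsm1.continuousOn (by fun_prop) hBC (hsides p.1 hp.1).1
  have hbot1 := hextend hsm1.continuousOn (by fun_prop) hBC (hsides p.1 hp.1).2
  simp only [hb p.1 hp.1] at hA0 htop1 hbot1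
  have hC : C = 0 := by nlinarith
  exact ⟨by rw [hBC p hp, hC]; linarith, by rw [hA p hp, hA0]⟩
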